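/- Let each of m channels require at least 28 flips if capped and 36 flips if not capped, where capping a channel requires that at least one of its two endpoint-gadgets is unlocked at cost 2 per unlocked gadget (paid once per gadget). Then the minimum total cost over all strategies equals 28m + 8·|uncovered| + 2·|unlocked| minimized over subsets of gadgets, which is minimized by taking a minimum vertex cover of the associated graph. -/

import Mathlib

/-- `S` is a vertex cover of `G`. -/
def IsVertexCover {V : Type*} (G : SimpleGraph V) (S : Finset V) : Prop :=
  ∀ e ∈ G.edgeSet, ∃ v ∈ S, v ∈ e

/-- The number of edges (channels) with neither endpoint gadget in `L`. -/
noncomputable def uncov {V : Type*} (G : SimpleGraph V) (L : Finset V) : ℕ :=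
  {e ∈ G.edgeSet | ∀ v ∈ e, v ∉ L}.ncard

/-- Total cost when the gadgets of `L` are unlocked: 2 per unlocked gadget,
36 per uncapped channel, 28 per capped channel. -/
noncomputable def flipCost {V : Type*} (G : SimpleGraph V) (L : Finset V) : ℕ :=
  2 * L.card + 36 * uncov G L + 28 * (G.edgeSet.ncard - uncov G L)

/-!
Since `uncov(L) ≤ m`, the truncated subtraction in `flipCost` is harmless and the cost of `L`
is `28m + 8·uncov(L) + 2|L|`.
A vertex cover `S` leaves nothing uncovered and costs `28m + 2|S|`. Conversely, adding one
endpoint of each uncovered edge to `L` gives a vertex cover of size at most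
`|L| + uncov(L)`, so `2τ(G) ≤ 2|L| + 2·uncov(L)`, which is below the cost of `L` minus `28m`.
-/

section

variable {V : Type*} {G : SimpleGraph V}

theorem isVertexCover_univ [Fintype V] : IsVertexCover G Finset.univ :=
  fun e _ => ⟨e.out.1, Finset.mem_univ _, Sym2.out_fst_mem e⟩

theorem uncov_eq_zero_of_isVertexCover {S : Finset V} (hS : IsVertexCover G S) :
    uncov G S = 0 := by
  rw [uncov, Set.sep_eq_empty_iff_mem_false.mpr, Set.ncard_empty]
  intro e he hout
  obtain ⟨v, hvS, hve⟩ := hS e he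
  exact hout v hve hvS

variable [Finite V]

theorem uncov_le_ncard_edgeSet (L : Finset V) : uncov G L ≤ G.edgeSet.ncard :=
  Set.ncard_le_ncard (Set.sep_subset _ _)

theorem flipCost_eq (L : Finset V) :
    flipCost G L = 28 * G.edgeSet.ncard + 8 * uncov G L + 2 * L.card := by
  have := uncov_le_ncard_edgeSet (G := G) L
  rw [flipCost]
  omega

theorem exists_isVertexCover_card_le (L : Finset V) :
    ∃ S : Finset V, IsVertexCover G S ∧ S.card ≤ L.card + uncov G L := by
  classical
  set U := {e ∈ G.edgeSet | ∀ v ∈ e, v ∉ L}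
  have hU : U.Finite := Set.toFinite U
  refine ⟨L ∪ hU.toFinset.image (fun e => e.out.1), ?_, ?_⟩
  · intro e he
    by_cases hcapped : ∃ v ∈ L, v ∈ e
    · obtain ⟨v, hvL, hve⟩ := hcapped
      exact ⟨v, Finset.mem_union_left _ hvL, hve⟩
    · push Not at hcapped
      have heU : e ∈ hU.toFinset :=
        hU.mem_toFinset.mpr ⟨he, fun v hve hvL => hcapped v hvL hve⟩
      exact ⟨e.out.1, Finset.mem_union_right _ (Finset.mem_image_of_mem _ heU),
        Sym2.out_fst_mem e⟩
  · calc (L ∪ hU.toFinset.image (fun e => e.out.1)).card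
        ≤ L.card + (hU.toFinset.image (fun e => e.out.1)).card := Finset.card_union_le _ _
      _ ≤ L.card + hU.toFinset.card := by gcongr; exact Finset.card_image_le
      _ = L.card + uncov G L := by rw [uncov, Set.ncard_eq_toFinset_card U hU]

end

theorem stmt18_general {V : Type*} [Fintype V] (G : SimpleGraph V) :
    (∀ L : Finset V, flipCost G L =
        28 * G.edgeSet.ncard + 8 * uncov G L + 2 * L.card) ∧
    IsLeast {c : ℕ | ∃ L : Finset V, c = flipCost G L}
      (2 * sInf {m : ℕ | ∃ S : Finset V, IsVertexCover G S ∧ S.card = m} +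
        28 * G.edgeSet.ncard) := by
  set covers := {m : ℕ | ∃ S : Finset V, IsVertexCover G S ∧ S.card = m}
  refine ⟨flipCost_eq, ?_, ?_⟩
  · obtain ⟨S, hS, hcard⟩ : sInf covers ∈ covers :=
      Nat.sInf_mem ⟨_, Finset.univ, isVertexCover_univ, rfl⟩
    refine ⟨S, ?_⟩
    rw [flipCost_eq, uncov_eq_zero_of_isVertexCover hS, hcard]
    ring
  · rintro _ ⟨L, rfl⟩
    obtain ⟨S, hS, hcard⟩ := exists_isVertexCover_card_le (G := G) L
    have hτ : sInf covers ≤ S.card := Nat.sInf_le ⟨S, hS, rfl⟩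
    rw [flipCost_eq]
    omega

/-- With `m` channels (edges), the cost of unlocking `L` equals
`28m + 8·|uncovered| + 2·|unlocked|`, and its minimum over all subsets `L` of
gadgets is `2·τ(G) + 28m`, attained by a minimum vertex cover, where `τ(G)` is
the minimum vertex cover size. -/
theorem stmt18 {V : Type*} [Fintype V] [DecidableEq V] (G : SimpleGraph V) :
    (∀ L : Finset V, flipCost G L =
        28 * G.edgeSet.ncard + 8 * uncov G L + 2 * L.card) ∧
    IsLeast {c : ℕ | ∃ L : Finset V, c = flipCost G L}
      (2 * sInf {m : ℕ | ∃ S : Finset V, IsVertexCover G S ∧ S.card = m} +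
        28 * G.edgeSet.ncard) :=
  stmt18_general G
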